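/- arXiv:2304.08208 — 6 statements merged into one kernel-verified Lean document; each statement's English description precedes it below -/
import Mathlib

section
/- Let 0 < α < 1, let f : ℝ → ℝ be any function, and let x : ℕ → ℝ satisfy x(t+1) = x(0) + Σ_{j=0}^{t} [Γ(t−j+α)/(Γ(α)·Γ(t−j+1))]·(f(x(j)) − x(j)) for all t ≥ 0. If there exist real numbers u, v such that x(2k) = u and x(2k+1) = v for all k ≥ 0 (i.e., {u,v} is an exactly period-2 orbit), then u = v. In other words, the fractional-order system cannot have a genuine period-2 orbit. -/
open Real Finset

/-!
Write `g = f - id` and `c n = Γ(n + α) / (Γ(α) n!)` for the memory kernel. Since `c 0 = 1`, the first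
three steps of a period-2 orbit `u, v, u, v` give `v - u = g u`, `c 1 * g u + g v = 0` and
`c 2 * g u + c 1 * g v = 0`, hence `(c 2 - c 1 ^ 2) * g u = 0`. For the fractional kernel
`c 2 - c 1 ^ 2 = α (1 - α) / 2`, which vanishes only at `α = 0, 1`; so `g u = 0` and `u = v`.
-/

noncomputable def fractionalKernel (α : ℝ) (n : ℕ) : ℝ :=
  Gamma (n + α) / (Gamma α * Gamma (n + 1))

section fractionalKernel

variable {α : ℝ}

theorem fractionalKernel_zero (hα : Gamma α ≠ 0) : fractionalKernel α 0 = 1 := by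
  simp [fractionalKernel, hα]

theorem Gamma_one_add (hα : Gamma α ≠ 0) : Gamma (1 + α) = α * Gamma α := by
  have hα0 : α ≠ 0 := by rintro rfl; exact hα Gamma_zero
  rw [add_comm, Gamma_add_one hα0]

theorem fractionalKernel_one (hα : Gamma α ≠ 0) : fractionalKernel α 1 = α := by
  rw [fractionalKernel, Nat.cast_one, one_add_one_eq_two, Gamma_two, Gamma_one_add hα]
  field_simp

theorem fractionalKernel_two (hα : Gamma α ≠ 0) :
    fractionalKernel α 2 = α * (α + 1) / 2 := by
  have hα1 : 1 + α ≠ 0 := fun h ↦ hα ((Gamma_eq_zero_iff α).mpr ⟨1, by push_cast; linarith⟩)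
  have hΓ : Gamma (2 + α) = (1 + α) * (α * Gamma α) := by
    rw [show (2 : ℝ) + α = (1 + α) + 1 by ring, Gamma_add_one hα1, Gamma_one_add hα]
  have hΓ3 : Gamma 3 = 2 := by simp
  simp only [fractionalKernel, Nat.cast_ofNat, show (2 : ℝ) + 1 = 3 by norm_num, hΓ, hΓ3]
  field_simp
  ring

end fractionalKernel

theorem eq_of_period_two_of_kernel_sq_ne {c : ℕ → ℝ} {g : ℝ → ℝ} {x : ℕ → ℝ}
    (hc0 : c 0 = 1) (hc : c 2 ≠ c 1 ^ 2)
    (hx : ∀ t : ℕ, x (t + 1) = x 0 + ∑ j ∈ range (t + 1), c (t - j) * g (x j))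
    (h2 : x 2 = x 0) (h3 : x 3 = x 1) : x 1 = x 0 := by
  have e1 := hx 0
  have e2 := hx 1
  have e3 := hx 2
  simp only [sum_range_succ, sum_range_zero, Nat.sub_self, Nat.sub_zero, Nat.reduceSub,
    zero_add, hc0, one_mul, h2, h3] at e1 e2 e3
  have hA : (c 2 - c 1 ^ 2) * g (x 0) = 0 := by linear_combination e1 - e3 + c 1 * e2
  have hA0 : g (x 0) = 0 := (mul_eq_zero.mp hA).resolve_left (sub_ne_zero.mpr hc)
  linarith

/-- The fractional-order discrete system of order `α ∈ (0,1)` associated with `f`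
cannot have a genuine period-2 orbit: if the trajectory takes value `u` at all even
times and `v` at all odd times, then `u = v`. -/
theorem no_period_two_orbit (α : ℝ) (hα0 : 0 < α) (hα1 : α < 1) (f : ℝ → ℝ) (x : ℕ → ℝ)
    (hx : ∀ t : ℕ, x (t + 1) = x 0 + ∑ j ∈ Finset.range (t + 1),
      Real.Gamma (((t - j : ℕ) : ℝ) + α) /
        (Real.Gamma α * Real.Gamma (((t - j : ℕ) : ℝ) + 1)) * (f (x j) - x j))
    (u v : ℝ) (hper : ∀ k : ℕ, x (2 * k) = u ∧ x (2 * k + 1) = v) :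
    u = v := by
  have hΓ : Gamma α ≠ 0 := (Gamma_pos_of_pos hα0).ne'
  have hc : fractionalKernel α 2 ≠ fractionalKernel α 1 ^ 2 := by
    rw [fractionalKernel_one hΓ, fractionalKernel_two hΓ]
    nlinarith [mul_pos hα0 (sub_pos.mpr hα1)]
  obtain ⟨hu0, hv1⟩ := hper 0
  obtain ⟨hu2, hv3⟩ := hper 1
  simp only [Nat.mul_zero, Nat.mul_one] at hu0 hv1 hu2 hv3
  have hvu := eq_of_period_two_of_kernel_sq_ne (g := fun y => f y - y)
    (fractionalKernel_zero hΓ) hc hx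
    (hu2.trans hu0.symm) (hv3.trans hv1.symm)
  rw [← hu0, ← hv1, hvu]
end

section
/- Let 0 < α < 1 and let z > 1 be a real number. Then Σ_{t=0}^{∞} [Γ(2t+α)/(Γ(α)·(2t)!)]·z^{−t} converges and equals z^{α/2}·[(√z − 1)^{−α} + (√z + 1)^{−α}]/2. -/
/-!
Since `Γ(n + α) / (Γ(α) n!) = (α)ₙ / n!`, these are the coefficients of the binomial series
`(1 - x)^(-α) = ∑ (α)ₙ / n! xⁿ` for `|x| < 1`. Averaging this series at `x` and `-x` keeps exactly
the even-index terms, and at `x = z^(-1/2)` the two values are `z^(α/2) (√z ∓ 1)^(-α)`.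
-/

open Real

theorem Real.Gamma_add_nat_eq_mul_ascPochhammer {a : ℝ} (ha : ∀ k : ℕ, a ≠ -k) (n : ℕ) :
    Gamma (a + n) = Gamma a * (ascPochhammer ℝ n).eval a := by
  induction n with
  | zero => simp
  | succ n ih =>
    have hn : a + n ≠ 0 := fun h => ha n (by linarith)
    rw [Nat.cast_succ, ← add_assoc, Gamma_add_one hn, ih, ascPochhammer_succ_eval]
    ring

theorem Ring.choose_add_sub_one_eq_ascPochhammer_div {K : Type*} [Field K] [CharZero K]
    (a : K) (n : ℕ) : Ring.choose (a + n - 1) n = (ascPochhammer K n).eval a / n.factorial := by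
  rw [← Ring.multichoose_eq, eq_div_iff (Nat.cast_ne_zero.mpr n.factorial_ne_zero), mul_comm,
    ← nsmul_eq_mul, Ring.factorial_nsmul_multichoose_eq_ascPochhammer,
    Polynomial.ascPochhammer_smeval_eq_eval]

theorem Real.Gamma_nat_add_div_eq_choose {a : ℝ} (ha : 0 < a) (n : ℕ) :
    Gamma (n + a) / (Gamma a * n.factorial) = Ring.choose (a + n - 1) n := by
  have ha' : ∀ k : ℕ, a ≠ -k := fun k h => by linarith [k.cast_nonneg (α := ℝ)]
  rw [add_comm, Gamma_add_nat_eq_mul_ascPochhammer ha',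
    Ring.choose_add_sub_one_eq_ascPochhammer_div, mul_div_mul_left _ _ (Gamma_pos_of_pos ha).ne']

theorem Real.hasSum_choose_mul_pow {a x : ℝ} (hx : |x| < 1) :
    HasSum (fun n : ℕ => Ring.choose (a + n - 1) n * x ^ n) ((1 - x) ^ (-a)) := by
  have h := (one_div_one_sub_rpow_hasFPowerSeriesOnBall_zero a).hasSum
    (y := x) (by simpa [enorm_eq_nnnorm, ← NNReal.coe_lt_one] using hx)
  simp only [FormalMultilinearSeries.ofScalars_apply_eq, smul_eq_mul, zero_add] at h
  rwa [rpow_neg (by linarith [le_abs_self x]), ← one_div]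

theorem Real.hasSum_Gamma_nat_add_div_mul_pow {a x : ℝ} (ha : 0 < a) (hx : |x| < 1) :
    HasSum (fun n : ℕ => Gamma (n + a) / (Gamma a * n.factorial) * x ^ n) ((1 - x) ^ (-a)) := by
  simpa only [Gamma_nat_add_div_eq_choose ha] using hasSum_choose_mul_pow hx

theorem HasSum.even_part {K : Type*} [Field K] [CharZero K] [TopologicalSpace K]
    [IsTopologicalRing K] {f : ℕ → K} {a b : K} (ha : HasSum f a)
    (hb : HasSum (fun n => (-1) ^ n * f n) b) :
    HasSum (fun k => f (2 * k)) ((a + b) / 2) := by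
  have hodd : ∀ n ∉ Set.range (2 * ·), (f n + (-1) ^ n * f n) / 2 = 0 := by
    intro n hn
    have : Odd n := Nat.not_even_iff_odd.mp fun ⟨k, hk⟩ => hn ⟨k, show 2 * k = n by omega⟩
    simp [this.neg_one_pow]
  refine ((mul_right_injective₀ two_ne_zero).hasSum_iff hodd |>.mpr
    ((ha.add hb).div_const 2)).congr_fun fun k => ?_
  simp [pow_mul]

theorem Real.one_add_div_rpow_neg {s c : ℝ} (hs : 0 < s) (hc : 0 ≤ s + c) (a : ℝ) :
    (1 + c / s) ^ (-a) = s ^ a * (s + c) ^ (-a) := by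
  rw [show 1 + c / s = (s + c) / s by field_simp, div_rpow hc hs.le, rpow_neg hc, rpow_neg hs.le]
  field_simp

theorem Z_transform_phi1_general (α z : ℝ) (h0 : 0 < α) (hz : 1 < z) :
    HasSum (fun t : ℕ =>
        Real.Gamma (2 * (t : ℝ) + α) / (Real.Gamma α * ((2 * t).factorial : ℝ)) *
          z ^ (-(t : ℤ)))
      (z ^ (α / 2) * ((Real.sqrt z - 1) ^ (-α) + (Real.sqrt z + 1) ^ (-α)) / 2) := by
  have hs : 1 < √z := by simpa using sqrt_lt_sqrt zero_le_one hz
  have hx : |(√z)⁻¹| < 1 := by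
    rw [abs_inv, abs_of_pos (by positivity)]
    exact inv_lt_one_of_one_lt₀ hs
  have hsum := (hasSum_Gamma_nat_add_div_mul_pow h0 hx).even_part
    ((hasSum_Gamma_nat_add_div_mul_pow h0 (x := -(√z)⁻¹) (by rwa [abs_neg])).congr_fun
      fun n => by ring)
  have hsqrt : z ^ (α / 2) = √z ^ α := by
    rw [sqrt_eq_rpow, ← rpow_mul (by positivity)]
    ring_nf
  have hval : z ^ (α / 2) * ((√z - 1) ^ (-α) + (√z + 1) ^ (-α)) / 2 =
      ((1 - (√z)⁻¹) ^ (-α) + (1 - -(√z)⁻¹) ^ (-α)) / 2 := by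
    rw [sub_neg_eq_add, show 1 - (√z)⁻¹ = 1 + -1 / √z by ring,
      show 1 + (√z)⁻¹ = 1 + 1 / √z by ring, one_add_div_rpow_neg (by positivity) (by linarith),
      one_add_div_rpow_neg (by positivity) (by linarith), hsqrt, ← sub_eq_add_neg]
    ring
  rw [hval]
  refine hsum.congr_fun fun t => ?_
  rw [pow_mul, inv_pow, sq_sqrt (by positivity), zpow_neg, zpow_natCast, inv_pow]
  push_cast
  rfl

/-- Z-transform of the even-index part `φ₁(t) = φ̃_α(2t)` of the binomial family:
for real `z > 1`, `Σ Γ(2t+α)/(Γ(α)·(2t)!)·z^(-t) = z^(α/2)·[(√z-1)^(-α) + (√z+1)^(-α)]/2`. -/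
theorem Z_transform_phi1 (α z : ℝ) (h0 : 0 < α) (h1 : α < 1) (hz : 1 < z) :
    HasSum (fun t : ℕ =>
        Real.Gamma (2 * (t : ℝ) + α) / (Real.Gamma α * ((2 * t).factorial : ℝ)) *
          z ^ (-(t : ℤ)))
      (z ^ (α / 2) * ((Real.sqrt z - 1) ^ (-α) + (Real.sqrt z + 1) ^ (-α)) / 2) :=
  Z_transform_phi1_general α z h0 hz
end

section
/- Let 0 < α < 1 and λ ≥ 1 + 2^{α} be real, set D = (λ − (1 − 2^{α}))·(λ − (1 + 2^{α})), a = 1 − 2^{α} + √D and b = 1 − 2^{α} − √D. Then (a − (1 − 2^{α/2}·sin(απ/4)))·(b − (1 − 2^{α/2}·sin(απ/4))) = −2^{α}·(cos(απ/4))² if and only if λ = 1 + √(2^{α} + 2^{1+2α} − 2^{1+3α/2}·sin(απ/4)). -/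
/-!
Write `t = 2^α`, `u = 2^(α/2)` (so `u² = t`), `s = sin(απ/4)`, `c = cos(απ/4)`. Since
`D = (λ - 1)² - t²`, the product on the left is `(us - t)² - D = t s² - 2tus + 2t² - (λ - 1)²`,
so by `s² + c² = 1` the point lies on Γ₂ exactly when `(λ - 1)² = t + 2t² - 2tus`. As
`λ - 1 ≥ t > 0`, this is the same as `λ - 1 = √(t + 2t² - 2tus)`.
-/

open Real

lemma eq_add_sqrt_iff_sq_sub {c x E : ℝ} (h : c < x) : x = c + √E ↔ (x - c) ^ 2 = E := by
  rw [← sub_eq_iff_eq_add', eq_comm, sqrt_eq_iff_mul_self_eq_of_pos (sub_pos.mpr h), sq]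

lemma rpow_div_two_sq {b : ℝ} (hb : 0 ≤ b) (x : ℝ) : (b ^ (x / 2)) ^ 2 = b ^ x := by
  rw [← rpow_natCast, ← rpow_mul hb]
  norm_num

lemma gamma2_equation_iff_sq (t u s c lam D : ℝ) (hu : u ^ 2 = t) (hsc : s ^ 2 + c ^ 2 = 1)
    (hD : D = (lam - (1 - t)) * (lam - (1 + t))) (hD0 : 0 ≤ D) :
    ((1 - t + √D) - (1 - u * s)) * ((1 - t - √D) - (1 - u * s)) = -(t * c ^ 2) ↔
      (lam - 1) ^ 2 = t + 2 * t ^ 2 - 2 * t * u * s := by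
  have hsqrt := sq_sqrt hD0
  have hus : u ^ 2 * s ^ 2 = t * s ^ 2 := by rw [hu]
  constructor <;> intro h <;> linear_combination -h - hsqrt + hus + t * hsc - hD

theorem logistic_crosses_Gamma2_general (α lam : ℝ)
    (hlam : 1 + (2 : ℝ) ^ α ≤ lam)
    (D a b : ℝ)
    (hD : D = (lam - (1 - (2 : ℝ) ^ α)) * (lam - (1 + (2 : ℝ) ^ α)))
    (ha : a = 1 - (2 : ℝ) ^ α + Real.sqrt D)
    (hb : b = 1 - (2 : ℝ) ^ α - Real.sqrt D) :
    (a - (1 - (2 : ℝ) ^ (α / 2) * Real.sin (α * π / 4))) *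
        (b - (1 - (2 : ℝ) ^ (α / 2) * Real.sin (α * π / 4))) =
        -((2 : ℝ) ^ α * (Real.cos (α * π / 4)) ^ 2) ↔
      lam = 1 + Real.sqrt ((2 : ℝ) ^ α + (2 : ℝ) ^ (1 + 2 * α) -
        (2 : ℝ) ^ (1 + 3 * α / 2) * Real.sin (α * π / 4)) := by
  have ht : 0 < (2 : ℝ) ^ α := rpow_pos_of_pos two_pos α
  have hpow₁ : (2 : ℝ) ^ (1 + 2 * α) = 2 * ((2 : ℝ) ^ α) ^ 2 := by
    rw [rpow_add two_pos, rpow_one, mul_comm 2 α, rpow_mul two_pos.le, rpow_ofNat]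
  have hpow₂ : (2 : ℝ) ^ (1 + 3 * α / 2) = 2 * (2 : ℝ) ^ α * (2 : ℝ) ^ (α / 2) := by
    rw [show 1 + 3 * α / 2 = 1 + α + α / 2 by ring, rpow_add two_pos, rpow_add two_pos, rpow_one]
  have hD0 : 0 ≤ D := by
    rw [hD]
    exact mul_nonneg (by linarith) (by linarith)
  rw [ha, hb, gamma2_equation_iff_sq _ _ _ _ lam D (rpow_div_two_sq two_pos.le α)
    (sin_sq_add_cos_sq _) hD hD0, eq_add_sqrt_iff_sq_sub (by linarith), hpow₁, hpow₂]

/-- For the fractional logistic map, the point `(a, b) = (f'(u), f'(v))` lies on the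
boundary curve Γ₂ exactly at `λ = 1 + √(2^α + 2^(1+2α) - 2^(1+3α/2) sin(απ/4))`. -/
theorem logistic_crosses_Gamma2 (α lam : ℝ) (h0 : 0 < α) (h1 : α < 1)
    (hlam : 1 + (2 : ℝ) ^ α ≤ lam)
    (D a b : ℝ)
    (hD : D = (lam - (1 - (2 : ℝ) ^ α)) * (lam - (1 + (2 : ℝ) ^ α)))
    (ha : a = 1 - (2 : ℝ) ^ α + Real.sqrt D)
    (hb : b = 1 - (2 : ℝ) ^ α - Real.sqrt D) :
    (a - (1 - (2 : ℝ) ^ (α / 2) * Real.sin (α * π / 4))) *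
        (b - (1 - (2 : ℝ) ^ (α / 2) * Real.sin (α * π / 4))) =
        -((2 : ℝ) ^ α * (Real.cos (α * π / 4)) ^ 2) ↔
      lam = 1 + Real.sqrt ((2 : ℝ) ^ α + (2 : ℝ) ^ (1 + 2 * α) -
        (2 : ℝ) ^ (1 + 3 * α / 2) * Real.sin (α * π / 4)) :=
  logistic_crosses_Gamma2_general α lam hlam D a b hD ha hb
end

section
/- Let 0 < α < 1 and let β < 0 be a real number with β ≤ (1 − 2^{α})/6, and set f(x) = βx(6 − x²), u₀ = √((6β + 2^{α} − 1)/β) and v₀ = −u₀. Then u₀ is real, f(u₀) = u₀ + 2^{α−1}(v₀ − u₀) and f(v₀) = v₀ + 2^{α−1}(u₀ − v₀), and f'(u₀) = f'(v₀) = −12β − 3(2^{α} − 1). -/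
open Real

/-! An odd map `f` has the symmetric asymptotic period-2 orbit `{u, -u}` as soon as
`f u = (1 - 2^α) u`, since `2^{α-1} (-u - u) = -2^α u`. For the cubic this reduces to
`β u² = 6β + 2^α - 1`, which is exactly what the choice of `u₀` gives; substituting the same
relation into `f'(u) = β(6 - 3u²)`, an even function, yields the common derivative. -/

theorem hasDerivAt_cubic (β x : ℝ) :
    HasDerivAt (fun x => β * x * (6 - x ^ 2)) (β * (6 - 3 * x ^ 2)) x := by
  refine (((hasDerivAt_id x).const_mul β).mul ((hasDerivAt_pow 2 x).const_sub 6)).congr_deriv ?_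
  simp only [id_eq, Nat.cast_ofNat]
  ring

theorem period_two_of_odd {R : Type*} [CommRing R] {f : R → R} (hodd : ∀ x, f (-x) = -f x)
    {c u : R} (hu : f u = (1 - 2 * c) * u) :
    f u = u + c * (-u - u) ∧ f (-u) = -u + c * (u - -u) := by
  refine ⟨by rw [hu]; ring, ?_⟩
  rw [hodd, hu]
  ring

theorem mul_sq_sqrt_div_self {a b : ℝ} (ha : a ≠ 0) (h : 0 ≤ b / a) :
    a * √(b / a) ^ 2 = b := by
  rw [sq_sqrt h, mul_div_cancel₀ _ ha]

theorem cubic_symmetric_period_two_points_general (α β : ℝ)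
    (hβ : β < 0) (hβ2 : β ≤ (1 - (2 : ℝ) ^ α) / 6)
    (f : ℝ → ℝ) (hf : ∀ x : ℝ, f x = β * x * (6 - x ^ 2))
    (u₀ v₀ : ℝ)
    (hu : u₀ = Real.sqrt ((6 * β + (2 : ℝ) ^ α - 1) / β))
    (hv : v₀ = -u₀) :
    f u₀ = u₀ + (2 : ℝ) ^ (α - 1) * (v₀ - u₀) ∧
    f v₀ = v₀ + (2 : ℝ) ^ (α - 1) * (u₀ - v₀) ∧
    deriv f u₀ = -12 * β - 3 * ((2 : ℝ) ^ α - 1) ∧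
    deriv f v₀ = -12 * β - 3 * ((2 : ℝ) ^ α - 1) := by
  obtain rfl : f = fun x => β * x * (6 - x ^ 2) := funext hf
  subst hv
  have hβu : β * u₀ ^ 2 = 6 * β + (2 : ℝ) ^ α - 1 := by
    rw [hu]
    exact mul_sq_sqrt_div_self hβ.ne (div_nonneg_of_nonpos (by linarith) hβ.le)
  have htwo : 2 * (2 : ℝ) ^ (α - 1) = 2 ^ α := by
    rw [rpow_sub_one two_ne_zero]
    ring
  have hfix : β * u₀ * (6 - u₀ ^ 2) = (1 - 2 * (2 : ℝ) ^ (α - 1)) * u₀ := by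
    linear_combination (-u₀) * hβu + u₀ * htwo
  obtain ⟨hfu, hfv⟩ := period_two_of_odd (f := fun x => β * x * (6 - x ^ 2))
    (fun x => by ring) hfix
  refine ⟨hfu, hfv, ?_, ?_⟩
  · rw [(hasDerivAt_cubic β u₀).deriv]
    linear_combination (-3) * hβu
  · rw [(hasDerivAt_cubic β (-u₀)).deriv]
    linear_combination (-3) * hβu

/-- For the fractional cubic map `f(x) = βx(6 - x²)` with `β < 0` and
`β ≤ (1 - 2^α)/6`, the symmetric points `u₀, v₀ = -u₀` satisfy the asymptotic
period-2 conditions, and the derivatives there both equal `-12β - 3(2^α - 1)`. -/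
theorem cubic_symmetric_period_two_points (α β : ℝ) (h0 : 0 < α) (h1 : α < 1)
    (hβ : β < 0) (hβ2 : β ≤ (1 - (2 : ℝ) ^ α) / 6)
    (f : ℝ → ℝ) (hf : ∀ x : ℝ, f x = β * x * (6 - x ^ 2))
    (u₀ v₀ : ℝ)
    (hu : u₀ = Real.sqrt ((6 * β + (2 : ℝ) ^ α - 1) / β))
    (hv : v₀ = -u₀) :
    f u₀ = u₀ + (2 : ℝ) ^ (α - 1) * (v₀ - u₀) ∧
    f v₀ = v₀ + (2 : ℝ) ^ (α - 1) * (u₀ - v₀) ∧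
    deriv f u₀ = -12 * β - 3 * ((2 : ℝ) ^ α - 1) ∧
    deriv f v₀ = -12 * β - 3 * ((2 : ℝ) ^ α - 1) :=
  cubic_symmetric_period_two_points_general α β hβ hβ2 f hf u₀ v₀ hu hv
end

section
/- Let 0 < α < 1 and set R = 2^{α} + 4^{α} − 2^{1+3α/2}·sin(απ/4). Then R > 0, the denominator 2^{α/2} − 2·sin(απ/4) is nonzero, and the point (a₁, b₁) with a₁ = [2^{1+α/2} − 2·sin(απ/4) − √R]/[2^{α/2} − 2·sin(απ/4)] and b₁ = [2^{1+α/2} − 2^{1+α}·sin(απ/4) − (2 − 2^{α})·√R]/[2^{1+α/2} + 2^{3α/2} − 2^{1+α}·sin(απ/4) − 2√R] satisfies both (a₁ − (1 − 2^{α−1}))·(b₁ − (1 − 2^{α−1})) = 4^{α−1} and (a₁ − (1 − 2^{α/2}·sin(απ/4)))·(b₁ − (1 − 2^{α/2}·sin(απ/4))) = −2^{α}·(cos(απ/4))²; i.e., (a₁, b₁) is an intersection point of the boundary curves Γ₁ and Γ₂. -/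
open Real

/-!
Put `T = 2^(α/2)`, `s = sin(απ/4)` and `r = √(1 + T² - 2Ts)`, so that `R = T²r²`, `√R = Tr` and
`r² - 1 = T(T - 2s)`. Relative to the centre `1 - 2^(α-1) = 1 - T²/2` of Γ₁ the point is
`(T(r-1)²/(2(T-2s)), T²(r+1)/(2(r-1)))`, whose coordinates multiply to `T³(r²-1)/(4(T-2s)) = T⁴/4`;
the equation of Γ₂ is a similar polynomial identity modulo `r² = 1 + T² - 2Ts` and `s² + cos² = 1`.

Everything is well defined because `2 sin(απ/4) < 2^(α/2)` for `0 ≤ α < 1`: writing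
`1 = λα + (1-λ)·2`, strict concavity of `sin` and convexity of `2^x` give
`2λ sin(απ/4) + 2(1-λ) < √2 ≤ λ 2^(α/2) + 2(1-λ)`, both sides of the inequality being equal
at `α = 1` and at `α = 2`.
-/

lemma two_mul_sin_lt_two_rpow_half {α : ℝ} (h0 : 0 ≤ α) (h1 : α < 1) :
    2 * sin (α * π / 4) < (2 : ℝ) ^ (α / 2) := by
  have hd : 0 < 2 - α := by linarith
  have ha : 0 < 1 / (2 - α) := by positivity
  have hb : 0 < (1 - α) / (2 - α) := div_pos (by linarith) hd
  have hab : 1 / (2 - α) + (1 - α) / (2 - α) = 1 := by field_simp; ring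
  have hsin := strictConcaveOn_sin_Icc.2 (x := α * π / 4) (y := π / 2)
    ⟨by positivity, by nlinarith [pi_pos]⟩ ⟨by positivity, by linarith [pi_pos]⟩
    (by intro h; nlinarith [pi_pos]) ha hb hab
  have hpow := (convexOn_rpow_left two_pos).2 (Set.mem_univ (α / 2)) (Set.mem_univ 1)
    ha.le hb.le hab
  simp only [smul_eq_mul] at hsin hpow
  rw [show 1 / (2 - α) * (α * π / 4) + (1 - α) / (2 - α) * (π / 2) = π / 4 by field_simp; ring,
    sin_pi_div_two, sin_pi_div_four] at hsin
  rw [show 1 / (2 - α) * (α / 2) + (1 - α) / (2 - α) * 1 = 1 / 2 by field_simp; ring,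
    rpow_one, ← sqrt_eq_rpow] at hpow
  have hmid : 2 * (1 / (2 - α) * sin (α * π / 4)) + 2 * ((1 - α) / (2 - α)) <
      1 / (2 - α) * 2 ^ (α / 2) + (1 - α) / (2 - α) * 2 := by linarith
  exact lt_of_mul_lt_mul_left (by linarith) ha.le

-- The paper's `a₁` and `b₁` in the variables `T = 2^(α/2)`, `s = sin(απ/4)`, `r = √R / T`.
noncomputable def intersectionA (T s r : ℝ) : ℝ := (2 * T - 2 * s - T * r) / (T - 2 * s)

noncomputable def intersectionB (T s r : ℝ) : ℝ :=
  (2 * T - 2 * T ^ 2 * s - (2 - T ^ 2) * (T * r)) /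
    (2 * T + T ^ 3 - 2 * T ^ 2 * s - 2 * (T * r))

section IntersectionPoint

variable {T s r : ℝ}

lemma intersectionA_sub (hr : r ^ 2 = 1 + T ^ 2 - 2 * T * s) (hTs : T - 2 * s ≠ 0) :
    intersectionA T s r - (1 - T ^ 2 / 2) = T * (r - 1) ^ 2 / (2 * (T - 2 * s)) := by
  rw [intersectionA]
  field_simp
  linear_combination (-T) * hr

lemma intersectionB_sub (hr : r ^ 2 = 1 + T ^ 2 - 2 * T * s) (hT : T ≠ 0) (hr1 : r ≠ 1) :
    intersectionB T s r - (1 - T ^ 2 / 2) = T ^ 2 * (r + 1) / (2 * (r - 1)) := by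
  have hden : 2 * T + T ^ 3 - 2 * T ^ 2 * s - 2 * (T * r) = T * (r - 1) ^ 2 := by
    linear_combination (-T) * hr
  have hr1' : r - 1 ≠ 0 := sub_ne_zero.2 hr1
  rw [intersectionB, hden]
  field_simp
  grind

lemma intersection_on_gamma1 (hr : r ^ 2 = 1 + T ^ 2 - 2 * T * s) (hT : T ≠ 0)
    (hTs : T - 2 * s ≠ 0) (hr1 : r ≠ 1) :
    (intersectionA T s r - (1 - T ^ 2 / 2)) * (intersectionB T s r - (1 - T ^ 2 / 2)) =
      T ^ 4 / 4 := by
  have hr1' : r - 1 ≠ 0 := sub_ne_zero.2 hr1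
  rw [intersectionA_sub hr hTs, intersectionB_sub hr hT hr1]
  field_simp
  grind

lemma intersection_on_gamma2 (hr : r ^ 2 = 1 + T ^ 2 - 2 * T * s) (hT : T ≠ 0)
    (hTs : T - 2 * s ≠ 0) (hr1 : r ≠ 1) :
    (intersectionA T s r - (1 - T * s)) * (intersectionB T s r - (1 - T * s)) =
      -(T ^ 2 * (1 - s ^ 2)) := by
  have hr1' : r - 1 ≠ 0 := sub_ne_zero.2 hr1
  rw [← sub_add_sub_cancel _ (1 - T ^ 2 / 2), ← sub_add_sub_cancel (intersectionB T s r)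
    (1 - T ^ 2 / 2), intersectionA_sub hr hTs, intersectionB_sub hr hT hr1]
  field_simp
  grind

end IntersectionPoint

/-- The point `(a₁, b₁)` is an intersection point of the boundary curves Γ₁ and Γ₂
of the stability region of the fractional-order alternating linear map. -/
theorem Gamma1_Gamma2_intersection (α : ℝ) (h0 : 0 < α) (h1 : α < 1)
    (R : ℝ)
    (hR : R = (2 : ℝ) ^ α + (4 : ℝ) ^ α - (2 : ℝ) ^ (1 + 3 * α / 2) * Real.sin (α * π / 4))
    (a₁ b₁ : ℝ)
    (ha : a₁ = ((2 : ℝ) ^ (1 + α / 2) - 2 * Real.sin (α * π / 4) - Real.sqrt R) /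
        ((2 : ℝ) ^ (α / 2) - 2 * Real.sin (α * π / 4)))
    (hb : b₁ = ((2 : ℝ) ^ (1 + α / 2) - (2 : ℝ) ^ (1 + α) * Real.sin (α * π / 4) -
          (2 - (2 : ℝ) ^ α) * Real.sqrt R) /
        ((2 : ℝ) ^ (1 + α / 2) + (2 : ℝ) ^ (3 * α / 2) -
          (2 : ℝ) ^ (1 + α) * Real.sin (α * π / 4) - 2 * Real.sqrt R)) :
    0 < R ∧
    (2 : ℝ) ^ (α / 2) - 2 * Real.sin (α * π / 4) ≠ 0 ∧
    (a₁ - (1 - (2 : ℝ) ^ (α - 1))) * (b₁ - (1 - (2 : ℝ) ^ (α - 1))) = (4 : ℝ) ^ (α - 1) ∧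
    (a₁ - (1 - (2 : ℝ) ^ (α / 2) * Real.sin (α * π / 4))) *
        (b₁ - (1 - (2 : ℝ) ^ (α / 2) * Real.sin (α * π / 4))) =
      -((2 : ℝ) ^ α * (Real.cos (α * π / 4)) ^ 2) := by
  set T := (2 : ℝ) ^ (α / 2)
  set s := sin (α * π / 4)
  have hT : 0 < T := by positivity
  have hsT : 2 * s < T := two_mul_sin_lt_two_rpow_half h0.le h1
  have hT2 : (2 : ℝ) ^ α = T ^ 2 := by rw [← rpow_mul_natCast two_pos.le]; norm_num
  have hT3 : (2 : ℝ) ^ (3 * α / 2) = T ^ 3 := by rw [← rpow_mul_natCast two_pos.le]; ring_nf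
  have hT4 : (4 : ℝ) ^ α = T ^ 4 := by
    rw [show (4 : ℝ) = 2 ^ (2 : ℝ) by norm_num, ← rpow_mul two_pos.le,
      ← rpow_mul_natCast two_pos.le]
    ring_nf
  set q := 1 + T ^ 2 - 2 * T * s
  have hq : 1 < q := by nlinarith
  have hRq : R = T ^ 2 * q := by rw [hR, rpow_add two_pos, rpow_one, hT2, hT3, hT4]; ring
  have hsqrtR : √R = T * √q := by rw [hRq, sqrt_mul (sq_nonneg T), sqrt_sq hT.le]
  have hr : √q ^ 2 = q := sq_sqrt (by linarith)
  have hr1 : 1 < √q := lt_sqrt_of_sq_lt (by simpa using hq)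
  have hTs : T - 2 * s ≠ 0 := by linarith
  obtain rfl : a₁ = intersectionA T s √q := by
    rw [ha, intersectionA, rpow_add two_pos, rpow_one, hsqrtR]
  obtain rfl : b₁ = intersectionB T s √q := by
    rw [hb, intersectionB, rpow_add two_pos, rpow_add two_pos, rpow_one, hT2, hT3, hsqrtR]
  refine ⟨by rw [hRq]; positivity, hTs, ?_, ?_⟩
  · rw [rpow_sub two_pos, rpow_sub four_pos, rpow_one, rpow_one, hT2, hT4]
    exact intersection_on_gamma1 hr hT.ne' hTs hr1.ne'
  · rw [hT2, cos_sq', ← intersection_on_gamma2 hr hT.ne' hTs hr1.ne']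
end

section
/- Let 0 < α < 1 and define a₃ = 1 + 2^{α/2}·[2 − α + √(2(2 − 2α + α²)·cos²(απ/4))] / [α·cos(απ/4) + (α − 2)·sin(απ/4)] and b₃ = 1 + 2^{α/2}·[2 − α − √(2(2 − 2α + α²)·cos²(απ/4))] / [α·cos(απ/4) + (α − 2)·sin(απ/4)]. Then the denominator α·cos(απ/4) + (α − 2)·sin(απ/4) is nonzero, a₃ < 0, and b₃ > 0. -/
open Real

/-! With `s = sin (απ/4)`, `c = cos (απ/4)` and `p = 2^(α/2)`, the denominator is `-E` for
`E = (2 - α) s - α c`, and `E > 0` because `sin x / x` decreases on `(0, π]`.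
Then `a₃ < 0` amounts to `E < p (2 - α + R)`, where `R` is the square root, which holds since
`E < 2 - α`. For `b₃ > 0` one needs `p (2 - α) - E < p R`; the difference of the squares of the two
sides factors as `E * M` with `M = 2p(2 - α) - (1 + p²)(2 - α) s - α(p² - 1) c`, so everything
reduces to `M > 0`. -/

theorem sin_div_lt_sin_div {x y : ℝ} (hx : 0 < x) (hxy : x < y) (hy : y ≤ π) :
    sin y / y < sin x / x := by
  have key := strictConcaveOn_sin_Icc.secant_strict_mono (a := 0) ⟨le_rfl, pi_pos.le⟩
    ⟨hx.le, hxy.le.trans hy⟩ ⟨(hx.trans hxy).le, hy⟩ hx.ne' (hx.trans hxy).ne' hxy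
  simpa only [sin_zero, sub_zero] using key

lemma mul_cos_lt_mul_sin {α : ℝ} (h0 : 0 < α) (h1 : α < 1) :
    α * cos (α * π / 4) < (2 - α) * sin (α * π / 4) := by
  have hπ := pi_pos
  have h := sin_div_lt_sin_div (x := α * π / 4) (y := (2 - α) * π / 4) (by positivity)
    (by nlinarith) (by nlinarith)
  rw [show (2 - α) * π / 4 = π / 2 - α * π / 4 by ring, sin_pi_div_two_sub,
    div_lt_div_iff₀ (by nlinarith) (by positivity)] at h
  nlinarith

lemma sin_mul_pi_div_four_le {α : ℝ} (h0 : -1 ≤ α) (h1 : α ≤ 1) :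
    sin (α * π / 4) ≤ √2 * (1 + α) / 4 := by
  have hπ := pi_pos
  have hγ := mul_le_sin (x := (1 - α) * π / 4) (by nlinarith) (by nlinarith)
  set γ := (1 - α) * π / 4
  rw [show α * π / 4 = π / 4 - γ by ring, sin_sub, sin_pi_div_four, cos_pi_div_four]
  have : 2 / π * γ = (1 - α) / 2 := by field_simp; ring
  nlinarith [cos_le_one γ, sqrt_nonneg 2]

lemma cos_mul_pi_div_four_le {α : ℝ} (h1 : α ≤ 1) :
    cos (α * π / 4) ≤ √2 / 2 * (1 + (1 - α) * π / 4) := by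
  have hπ := pi_pos
  set γ := (1 - α) * π / 4
  rw [show α * π / 4 = π / 4 - γ by ring, cos_sub, sin_pi_div_four, cos_pi_div_four]
  nlinarith [cos_le_one γ, sin_le (show 0 ≤ γ by positivity), sqrt_nonneg 2]

lemma sqrt_two_mul_le_two_rpow_half (α : ℝ) :
    √2 * (1 - log 2 / 2 * (1 - α)) ≤ (2 : ℝ) ^ (α / 2) := by
  rw [sqrt_eq_rpow, show α / 2 = 1 / 2 + (α - 1) / 2 by ring, rpow_add two_pos,
    rpow_def_of_pos two_pos ((α - 1) / 2)]
  gcongr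
  linarith [add_one_le_exp (log 2 * ((α - 1) / 2))]

lemma two_rpow_le_one_add {α : ℝ} (h0 : 0 ≤ α) (h1 : α ≤ 1) : (2 : ℝ) ^ α ≤ 1 + α := by
  simpa [one_add_one_eq_two] using rpow_one_add_le_one_add_mul_self (s := 1) (by norm_num) h0 h1

/-- The margin vanishes at `α = 1`, so every bound used here is exact at `α = 1`; what remains is
a cubic with the factor `1 - α`, once `log 2 < 0.7` and `π < 3.2`. -/
lemma margin_pos {α : ℝ} (h0 : 0 ≤ α) (h1 : α < 1) :
    0 < 2 * 2 ^ (α / 2) * (2 - α) - (1 + ((2 : ℝ) ^ (α / 2)) ^ 2) * (2 - α) * sin (α * π / 4)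
      - α * (((2 : ℝ) ^ (α / 2)) ^ 2 - 1) * cos (α * π / 4) := by
  have hπ := pi_pos
  have hs0 : 0 ≤ sin (α * π / 4) := sin_nonneg_of_nonneg_of_le_pi (by positivity) (by nlinarith)
  have hc0 : 0 ≤ cos (α * π / 4) := cos_nonneg_of_mem_Icc ⟨by nlinarith, by nlinarith⟩
  have hp2 : ((2 : ℝ) ^ (α / 2)) ^ 2 = 2 ^ α := by
    rw [← rpow_natCast, ← rpow_mul two_pos.le]; norm_num
  have hq1 : 1 ≤ ((2 : ℝ) ^ (α / 2)) ^ 2 := hp2 ▸ one_le_rpow one_le_two h0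
  have hq2 : ((2 : ℝ) ^ (α / 2)) ^ 2 ≤ 1 + α := hp2 ▸ two_rpow_le_one_add h0 h1.le
  have hl : log 2 / 2 < 0.35 := by linarith [log_two_lt_d9]
  have hK : π / 4 < 0.8 := by linarith [pi_lt_d2]
  have h2α : 0 ≤ 2 - α := by linarith
  calc 0 < √2 * ((1 - α) * (1.6 + 0.7 * α - 0.65 * α ^ 2)) := by
        have : 0 < 1.6 + 0.7 * α - 0.65 * α ^ 2 := by nlinarith
        have : 0 < 1 - α := by linarith
        positivity
    _ ≤ 2 * (√2 * (1 - log 2 / 2 * (1 - α))) * (2 - α)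
          - (1 + (1 + α)) * (2 - α) * (√2 * (1 + α) / 4)
          - α * α * (√2 / 2 * (1 + (1 - α) * π / 4)) := by
        nlinarith [mul_nonneg (mul_nonneg (sub_nonneg.2 h1.le) h2α) (sub_pos.2 hl).le,
          mul_nonneg (mul_nonneg (sq_nonneg α) (sub_nonneg.2 h1.le)) (sub_pos.2 hK).le,
          sqrt_nonneg 2]
    _ ≤ _ := by
        gcongr
        · exact sqrt_two_mul_le_two_rpow_half α
        · exact sin_mul_pi_div_four_le (by linarith) h1.le
        · linarith
        · exact cos_mul_pi_div_four_le h1.le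

lemma sq_mul_sub_sq_eq_mul_margin {α p s c : ℝ} (hsc : s ^ 2 + c ^ 2 = 1) :
    p ^ 2 * (2 * (2 - 2 * α + α ^ 2) * c ^ 2) - (p * (2 - α) - ((2 - α) * s - α * c)) ^ 2 =
      ((2 - α) * s - α * c) *
        (2 * p * (2 - α) - (1 + p ^ 2) * (2 - α) * s - α * (p ^ 2 - 1) * c) := by
  linear_combination p ^ 2 * (2 - α) ^ 2 * hsc

/-- Properties of the intersection point `(a₃, b₃)` of the boundary curves Γ₂ and Γ₃:
the common denominator is nonzero, `a₃ < 0` and `b₃ > 0`. -/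
theorem Gamma2_Gamma3_intersection_signs (α : ℝ) (h0 : 0 < α) (h1 : α < 1)
    (a₃ b₃ : ℝ)
    (ha : a₃ = 1 + (2 : ℝ) ^ (α / 2) *
        ((2 - α + Real.sqrt (2 * (2 - 2 * α + α ^ 2) * (Real.cos (α * π / 4)) ^ 2)) /
          (α * Real.cos (α * π / 4) + (α - 2) * Real.sin (α * π / 4))))
    (hb : b₃ = 1 + (2 : ℝ) ^ (α / 2) *
        ((2 - α - Real.sqrt (2 * (2 - 2 * α + α ^ 2) * (Real.cos (α * π / 4)) ^ 2)) /
          (α * Real.cos (α * π / 4) + (α - 2) * Real.sin (α * π / 4)))) :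
    α * Real.cos (α * π / 4) + (α - 2) * Real.sin (α * π / 4) ≠ 0 ∧
    a₃ < 0 ∧ 0 < b₃ := by
  have hπ := pi_pos
  have hE := mul_cos_lt_mul_sin h0 h1
  have hM := margin_pos h0.le h1
  have hc : 0 < cos (α * π / 4) := cos_pos_of_mem_Ioo ⟨by nlinarith, by nlinarith⟩
  have hsc := sin_sq_add_cos_sq (α * π / 4)
  set s := sin (α * π / 4)
  set c := cos (α * π / 4)
  set p := (2 : ℝ) ^ (α / 2)
  set R := √(2 * (2 - 2 * α + α ^ 2) * c ^ 2)
  set E := (2 - α) * s - α * c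
  have hp : 1 ≤ p := one_le_rpow one_le_two (by positivity)
  have hR : 0 ≤ R := sqrt_nonneg _
  have hR2 : R ^ 2 = 2 * (2 - 2 * α + α ^ 2) * c ^ 2 := sq_sqrt (by nlinarith)
  have hD : α * c + (α - 2) * s = -E := by ring
  have hEa : E < p * (2 - α + R) := by nlinarith [sin_le_one (α * π / 4)]
  have hEb : p * (2 - α - R) < E := by
    have hsq : (p * (2 - α) - E) ^ 2 < (p * R) ^ 2 := by
      rw [mul_pow, hR2]
      nlinarith [sq_mul_sub_sq_eq_mul_margin (α := α) (p := p) hsc, mul_pos (sub_pos.2 hE) hM]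
    linarith [le_abs_self (p * (2 - α) - E), abs_lt_of_sq_lt_sq hsq (by positivity)]
  rw [ha, hb, hD, mul_div_assoc', mul_div_assoc', div_neg, div_neg]
  refine ⟨by linarith, ?_, ?_⟩
  · linarith [(one_lt_div (by linarith)).2 hEa]
  · linarith [(div_lt_one (by linarith)).2 hEb]
end
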